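/- arXiv:2508.13760 — 2 statements merged into one kernel-verified Lean document; each statement's English description precedes it below -/
import Mathlib

section
/- If r₁, r₂ ∈ R_∞ have the same invariants — the same multiset of quasi-cycle lengths, the same multiset of cycle lengths, and the same number of points outside D(r) ∪ I(r) — then there exists a finite permutation s ∈ S_∞ with r₁ = s r₂ s⁻¹. -/
/-- Partial maps of `ℕ`, modeling elements of the symmetric inverse semigroup `R_∞`. -/
def PB := ℕ → Option ℕ

/-- Iteration of a partial map. -/
def PB.iter (g : PB) : ℕ → ℕ → Option ℕ
  | 0, a => some a
  | k + 1, a => (PB.iter g k a).bind g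

/-- The domain `D(r)`. -/
def PB.Dom (g : PB) : Set ℕ := {x | g x ≠ none}

/-- The range `I(r)`. -/
def PB.Ran (g : PB) : Set ℕ := {y | ∃ x, g x = some y}

/-- Membership in `R_∞`: injective, identity outside a finite set. -/
def PB.Valid (g : PB) : Prop :=
  (∀ x y z, g x = some z → g y = some z → x = y) ∧ {x | g x ≠ some x}.Finite

/-- `m(r,a)`: the least `k ≥ 1` with `r^k(a) ∈ I(r) \ D(r)` (for `a ∈ D(r) \ I(r)`). -/
noncomputable def PB.qlen (g : PB) (a : ℕ) : ℕ :=
  sInf {k | 1 ≤ k ∧ ∃ y, g.iter k a = some y ∧ y ∈ g.Ran \ g.Dom}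

/-- `x` lies on a (usual) cycle of `r` of least period `n`. -/
def PB.CycPt (g : PB) (x n : ℕ) : Prop :=
  (∀ k, ∃ y, g.iter k x = some y) ∧ IsLeast {k | 1 ≤ k ∧ g.iter k x = some x} n

/-- Conjugation of a partial bijection by a permutation: `s r s⁻¹`. -/
def PB.conj (s : Equiv.Perm ℕ) (g : PB) : PB := fun x => (g (s⁻¹ x)).map s

/-!
Outside the finite set `Supp g` of non-fixed points, `g` is the identity, and `Supp g` is the
disjoint union of the forward orbits of its *representatives*: the points outside the range `I`,
each starting a chain that runs for `qlen` steps until it leaves the domain `D` (zero steps for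
the points outside `D ∪ I`), and the least elements of the nontrivial cycles. The isomorphism type
of such an orbit is determined by its chain length or cycle length, and the hypotheses say that
every length occurs equally often for `g₁` and `g₂` (a cycle of length `n` carries `n` points).
Matching representatives `b ↦ β b` of the same shape, `g₂^[k] b ↦ g₁^[k] (β b)` is a bijection
`Supp g₂ → Supp g₁` intertwining `g₂` and `g₁`, and it extends to a finitary permutation.
-/

open Function Set

theorem exists_bijOn_of_ncard_fiber_eq {α β κ : Type*} [Nonempty β] {A : Set α} {B : Set β}
    (hA : A.Finite) (hB : B.Finite) (p : α → κ) (q : β → κ)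
    (h : ∀ k, {a | a ∈ A ∧ p a = k}.ncard = {b | b ∈ B ∧ q b = k}.ncard) :
    ∃ f : α → β, BijOn f A B ∧ ∀ a ∈ A, q (f a) = p a := by
  have hfiber : ∀ k, ∃ f : α → β, BijOn f {a | a ∈ A ∧ p a = k} {b | b ∈ B ∧ q b = k} := by
    intro k
    have hAk : {a | a ∈ A ∧ p a = k}.Finite := hA.subset fun a ha => ha.1
    have hBk : {b | b ∈ B ∧ q b = k}.Finite := hB.subset fun b hb => hb.1
    exact hAk.exists_bijOn_of_encard_eq (by rw [← hAk.cast_ncard_eq, ← hBk.cast_ncard_eq, h k])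
  choose F hF using hfiber
  have hFA : ∀ a ∈ A, F (p a) a ∈ B ∧ q (F (p a) a) = p a := fun a ha => (hF (p a)).mapsTo ⟨ha, rfl⟩
  refine ⟨fun a => F (p a) a, ⟨fun a ha => (hFA a ha).1, fun a ha a' ha' he => ?_, fun b hb => ?_⟩,
    fun a ha => (hFA a ha).2⟩
  · simp only at he
    have hpp : p a = p a' := by rw [← (hFA a ha).2, he, (hFA a' ha').2]
    rw [← hpp] at he
    exact (hF (p a)).injOn ⟨ha, rfl⟩ ⟨ha', hpp.symm⟩ he
  · obtain ⟨a, ⟨ha, hpa⟩, hab⟩ := (hF (q b)).surjOn ⟨hb, rfl⟩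
    exact ⟨a, ha, by simp only [hpa, hab]⟩

theorem Set.BijOn.exists_perm_extend {α : Type*} {A B : Set α} {f : α → α} (hA : A.Finite)
    (hB : B.Finite) (hf : BijOn f A B) :
    ∃ s : Equiv.Perm α, {x | s x ≠ x}.Finite ∧ EqOn s f A ∧ MapsTo s Aᶜ Bᶜ := by
  classical
  set U := (hA.union hB).toFinset
  obtain ⟨σ, hσ⟩ := Set.MapsTo.exists_equiv_extend_of_card_eq (α := U) (t := U)
    (s := {x | ↑x ∈ A}) (f := fun x => f x) (by simp)
    (fun x hx => by simpa [U] using Or.inr (hf.mapsTo hx))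
    (fun x hx y hy hxy => Subtype.ext (hf.injOn hx hy hxy))
  have hU : ∀ x ∈ A, x ∈ U := fun x hx => by simp [U, hx]
  have hsA : EqOn (Equiv.Perm.ofSubtype σ) f A := fun x hx => by
    rw [Equiv.Perm.ofSubtype_apply_of_mem σ (hU x hx)]
    exact hσ ⟨x, hU x hx⟩ hx
  refine ⟨Equiv.Perm.ofSubtype σ, (hA.union hB).subset fun x hx => ?_, hsA, fun x hx hsx => ?_⟩
  · by_contra hxU
    exact hx (Equiv.Perm.ofSubtype_apply_of_not_mem σ (by simpa [U] using hxU))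
  · obtain ⟨a, ha, hfa⟩ := hf.surjOn hsx
    rw [← hsA ha] at hfa
    exact hx ((Equiv.Perm.ofSubtype σ).injective hfa ▸ ha)

theorem Function.iterate_eq_iterate_iff_of_mem_periodicPts {α : Type*} {f : α → α} {x : α}
    (hx : x ∈ periodicPts f) {i j : ℕ} :
    f^[i] x = f^[j] x ↔ i % minimalPeriod f x = j % minimalPeriod f x := by
  have hp := minimalPeriod_pos_of_mem_periodicPts hx
  rw [← iterate_mod_minimalPeriod_eq (n := i), ← iterate_mod_minimalPeriod_eq (n := j)]
  exact iterate_eq_iterate_iff_of_lt_minimalPeriod (Nat.mod_lt _ hp) (Nat.mod_lt _ hp)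

namespace PB

/-- `g` as a self-map of `Option ℕ`, so that `Function.minimalPeriod` and its API apply. -/
def step (g : PB) : Option ℕ → Option ℕ := fun o => o.bind g

def Supp (g : PB) : Set ℕ := {x | g x ≠ some x}

def orbit (g : PB) (x : ℕ) : Set ℕ := {y | ∃ k, g.step^[k] (some x) = some y}

variable {g g' : PB} {x y b b' : ℕ}

@[simp] theorem step_some (g : PB) (x : ℕ) : g.step (some x) = g x := rfl

@[simp] theorem step_none (g : PB) : g.step none = none := rfl

@[simp] theorem iterate_step_none (g : PB) (k : ℕ) : g.step^[k] none = none :=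
  iterate_fixed rfl k

theorem iter_eq_iterate_step (g : PB) (k x : ℕ) : g.iter k x = g.step^[k] (some x) := by
  induction k with
  | zero => rfl
  | succ k ih => rw [iterate_succ_apply', ← ih]; rfl

theorem iterate_step_eq_none_of_le {o : Option ℕ} {i j : ℕ} (h : g.step^[i] o = none)
    (hij : i ≤ j) : g.step^[j] o = none := by
  obtain ⟨d, rfl⟩ := Nat.exists_eq_add_of_le hij
  rw [add_comm, iterate_add_apply, h, iterate_step_none]

theorem mem_ran_of_iterate_step {k : ℕ} (hk : 0 < k) (h : g.step^[k] (some x) = some y) :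
    y ∈ g.Ran := by
  obtain ⟨k, rfl⟩ := Nat.exists_eq_succ_of_ne_zero hk.ne'
  rw [iterate_succ_apply'] at h
  cases hz : g.step^[k] (some x) with
  | none => simp [hz] at h
  | some z => exact ⟨z, by simpa [hz] using h⟩

theorem mem_ran_of_mem_periodicPts (hx : some x ∈ periodicPts g.step) : x ∈ g.Ran := by
  obtain ⟨p, hp, hpx⟩ := hx
  exact mem_ran_of_iterate_step hp hpx.eq

theorem mem_supp_of_notMem_ran (hx : x ∉ g.Ran) : x ∈ g.Supp := fun h => hx ⟨x, h⟩

theorem mem_supp_iff_minimalPeriod_ne_one : x ∈ g.Supp ↔ minimalPeriod g.step (some x) ≠ 1 := by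
  rw [Ne, minimalPeriod_eq_one_iff_isFixedPt]
  rfl

theorem mem_orbit_trans {z : ℕ} (hy : y ∈ g.orbit x) (hz : z ∈ g.orbit y) : z ∈ g.orbit x := by
  obtain ⟨k, hk⟩ := hy
  obtain ⟨m, hm⟩ := hz
  exact ⟨m + k, by rw [iterate_add_apply, hk, hm]⟩

theorem mem_periodicPts_of_mem_orbit (hx : some x ∈ periodicPts g.step) (hy : y ∈ g.orbit x) :
    some y ∈ periodicPts g.step := by
  obtain ⟨k, hk⟩ := hy
  obtain ⟨p, hp, hpx⟩ := hx
  exact ⟨p, hp, hk ▸ hpx.apply_iterate k⟩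

theorem mem_orbit_of_mem_periodicPts (hx : some x ∈ periodicPts g.step) (hy : y ∈ g.orbit x) :
    x ∈ g.orbit y := by
  obtain ⟨k, hk⟩ := hy
  have hmod := Nat.mod_lt k (minimalPeriod_pos_of_mem_periodicPts hx)
  refine ⟨minimalPeriod g.step (some x) - k % minimalPeriod g.step (some x), ?_⟩
  have hy : g.step^[k % minimalPeriod g.step (some x)] (some x) = some y := by
    rw [iterate_mod_minimalPeriod_eq, hk]
  rw [← hy, ← iterate_add_apply, Nat.sub_add_cancel hmod.le, iterate_minimalPeriod]

theorem iterate_step_ne_none_of_mem_periodicPts (hx : some x ∈ periodicPts g.step) (k : ℕ) :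
    g.step^[k] (some x) ≠ none := by
  rw [← iterate_mod_minimalPeriod_eq]
  intro h
  have := iterate_step_eq_none_of_le h
    (Nat.mod_lt k (minimalPeriod_pos_of_mem_periodicPts hx)).le
  simp at this

theorem qlen_eq_of_iterate_step_eq_none_iff {L : ℕ}
    (h : ∀ i, g.step^[i] (some b) = none ↔ L < i) : g.qlen b = L := by
  have hset : {k | 1 ≤ k ∧ ∃ y, g.iter k b = some y ∧ y ∈ g.Ran \ g.Dom} =
      {k | 1 ≤ k ∧ k = L} := by
    ext k
    simp only [mem_ofPred_eq, iter_eq_iterate_step, mem_sdiff, Dom, not_not]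
    constructor
    · rintro ⟨hk, y, hy, -, hgy⟩
      have hsucc : g.step^[k + 1] (some b) = none := by
        rw [iterate_succ_apply', hy, step_some, hgy]
      have hle : ¬ L < k := by rw [← h, hy]; simp
      exact ⟨hk, by have := (h _).mp hsucc; omega⟩
    · rintro ⟨hk, rfl⟩
      obtain ⟨y, hy⟩ := Option.ne_none_iff_exists'.mp (mt (h k).mp (lt_irrefl k))
      refine ⟨hk, y, hy, mem_ran_of_iterate_step hk hy, ?_⟩
      have hsucc := (h (k + 1)).mpr (Nat.lt_succ_self k)
      rwa [iterate_succ_apply', hy, step_some] at hsucc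
  rw [qlen, hset]
  rcases Nat.eq_zero_or_pos L with rfl | hL
  · rw [show {k | 1 ≤ k ∧ k = 0} = ∅ from eq_empty_of_forall_notMem fun k ⟨h1, h2⟩ => by omega]
    exact Nat.sInf_empty
  · rw [show {k | 1 ≤ k ∧ k = L} = {L} from ext fun k => ⟨fun ⟨_, hk⟩ => hk, fun hk => ⟨hk ▸ hL, hk⟩⟩]
    exact csInf_singleton L

theorem Valid.iterate_step_inj (hg : g.Valid) {k : ℕ} {o o' : Option ℕ}
    (h : g.step^[k] o = g.step^[k] o') (hne : g.step^[k] o ≠ none) : o = o' := by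
  induction k generalizing o o' with
  | zero => exact h
  | succ k ih =>
    have hstep := ih h hne
    have hne' : g.step o ≠ none := fun h0 => hne (by rw [iterate_succ_apply, h0, iterate_step_none])
    cases o with
    | none => simp at hne'
    | some a =>
      cases o' with
      | none => simp [hstep] at hne'
      | some a' =>
        obtain ⟨z, hz⟩ := Option.ne_none_iff_exists'.mp hne'
        simp only [step_some] at hz hstep
        rw [hg.1 a a' z hz (hstep ▸ hz)]

theorem Valid.step_mem_supp (hg : g.Valid) (hx : x ∈ g.Supp) (h : g x = some y) : y ∈ g.Supp := by
  rintro (hy : g y = some y)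
  obtain rfl := hg.1 x y y h hy
  exact hx h

theorem Valid.iterate_step_mem_supp (hg : g.Valid) {k : ℕ} (hx : x ∈ g.Supp)
    (h : g.step^[k] (some x) = some y) : y ∈ g.Supp := by
  induction k generalizing y with
  | zero => exact Option.some_injective _ h ▸ hx
  | succ k ih =>
    rw [iterate_succ_apply'] at h
    cases hz : g.step^[k] (some x) with
    | none => simp [hz] at h
    | some z => exact hg.step_mem_supp (ih hz) (by rwa [hz] at h)

theorem Valid.mem_periodicPts_iff_of_mem_orbit (hg : g.Valid) (hy : y ∈ g.orbit x) :
    some y ∈ periodicPts g.step ↔ some x ∈ periodicPts g.step := by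
  refine ⟨fun hper => ?_, fun hper => mem_periodicPts_of_mem_orbit hper hy⟩
  obtain ⟨k, hk⟩ := hy
  obtain ⟨p, hp, hpy⟩ := hper
  refine mk_mem_periodicPts hp (hg.iterate_step_inj (k := k) ?_ ?_)
  · rw [← iterate_add_apply, add_comm, iterate_add_apply, hk]
    exact hpy.eq
  · rw [← iterate_add_apply, add_comm, iterate_add_apply, hk, hpy.eq]
    simp

/-- Pigeonhole: the `N + 1` points `g.step^[i] (some x)`, `i ≤ N`, lie in `g.Supp`, so two of
them coincide. -/
theorem Valid.mem_periodicPts_of_ncard_le (hg : g.Valid) {N : ℕ} (hx : x ∈ g.Supp)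
    (hN : g.Supp.ncard ≤ N) (h : g.step^[N] (some x) = some y) : some y ∈ periodicPts g.step := by
  have hdef : ∀ i ≤ N, g.step^[i] (some x) ≠ none := fun i hi hi0 =>
    by simp [iterate_step_eq_none_of_le hi0 hi] at h
  obtain ⟨i, hi, j, hj, hij, heq⟩ := exists_ne_map_eq_of_ncard_lt_of_maps_to
    (s := Iio (N + 1)) (t := some '' g.Supp) (f := fun i => g.step^[i] (some x))
    (by rw [ncard_image_of_injective _ (Option.some_injective _), ncard_Iio_nat]; omega)
    (fun i hi => by
      obtain ⟨z, hz⟩ := Option.ne_none_iff_exists'.mp (hdef i (Nat.lt_succ_iff.mp hi))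
      exact ⟨z, hg.iterate_step_mem_supp hx hz, hz.symm⟩)
    (hg.2.image _)
  have key : ∀ i j, i < j → j ≤ N → g.step^[i] (some x) = g.step^[j] (some x) →
      some y ∈ periodicPts g.step := by
    intro i j hij hjN heq
    have hper : IsPeriodicPt g.step (j - i) (g.step^[i] (some x)) := by
      rw [IsPeriodicPt, IsFixedPt, ← iterate_add_apply, Nat.sub_add_cancel hij.le, heq]
    refine mk_mem_periodicPts (Nat.sub_pos_of_lt hij) ?_
    rw [← h, ← Nat.sub_add_cancel (hij.le.trans hjN), iterate_add_apply]
    exact hper.apply_iterate _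
  rcases Nat.lt_or_gt_of_ne hij with hlt | hlt
  · exact key i j hlt (Nat.lt_succ_iff.mp hj) heq
  · exact key j i hlt (Nat.lt_succ_iff.mp hi) heq.symm

theorem Valid.eq_of_iterate_step_eq_of_notMem_ran (hg : g.Valid) {i j : ℕ} (hb : b ∉ g.Ran)
    (hb' : b' ∉ g.Ran) (h : g.step^[i] (some b) = some y) (h' : g.step^[j] (some b') = some y) :
    b = b' ∧ i = j := by
  wlog hij : i ≤ j generalizing b b' i j
  · exact (this hb' hb h' h (le_of_not_ge hij)).imp Eq.symm Eq.symm
  obtain ⟨d, rfl⟩ := Nat.exists_eq_add_of_le hij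
  rw [iterate_add_apply] at h'
  have hbd : some b = g.step^[d] (some b') := hg.iterate_step_inj (h.trans h'.symm) (by simp [h])
  rcases Nat.eq_zero_or_pos d with rfl | hd
  · exact ⟨Option.some_injective _ hbd, rfl⟩
  · exact absurd (mem_ran_of_iterate_step hd hbd.symm) hb

theorem Valid.exists_iterate_step_eq_none (hg : g.Valid) (hb : b ∉ g.Ran) :
    ∃ k, g.step^[k] (some b) = none := by
  by_contra! h
  obtain ⟨y, hy⟩ := Option.ne_none_iff_exists'.mp (h g.Supp.ncard)
  have hper := hg.mem_periodicPts_of_ncard_le (mem_supp_of_notMem_ran hb) le_rfl hy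
  exact hb (mem_ran_of_mem_periodicPts ((hg.mem_periodicPts_iff_of_mem_orbit ⟨_, hy⟩).mp hper))

theorem Valid.iterate_step_eq_none_iff (hg : g.Valid) (hb : b ∉ g.Ran) {i : ℕ} :
    g.step^[i] (some b) = none ↔ g.qlen b < i := by
  classical
  have hex : ∃ k, g.step^[k + 1] (some b) = none := by
    obtain ⟨k, hk⟩ := hg.exists_iterate_step_eq_none hb
    exact ⟨k, iterate_step_eq_none_of_le hk k.le_succ⟩
  suffices h : ∀ i, g.step^[i] (some b) = none ↔ Nat.find hex < i by
    rw [h, qlen_eq_of_iterate_step_eq_none_iff h]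
  intro i
  refine ⟨fun hi => ?_, fun hi => iterate_step_eq_none_of_le (Nat.find_spec hex) hi⟩
  by_contra! hle
  cases i with
  | zero => simp at hi
  | succ m => exact Nat.find_min hex (by omega) hi

theorem Valid.iterate_step_eq_iterate_step_iff_of_notMem_ran (hg : g.Valid) (hb : b ∉ g.Ran)
    {i j : ℕ} : g.step^[i] (some b) = g.step^[j] (some b) ↔ i = j ∨ g.qlen b < i ∧ g.qlen b < j := by
  rw [← hg.iterate_step_eq_none_iff hb, ← hg.iterate_step_eq_none_iff hb]
  constructor
  · intro h
    cases hi : g.step^[i] (some b) with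
    | none => exact Or.inr ⟨rfl, h.symm.trans hi⟩
    | some y => exact Or.inl (hg.eq_of_iterate_step_eq_of_notMem_ran hb hb hi (h ▸ hi)).2
  · rintro (rfl | ⟨hi, hj⟩)
    · rfl
    · rw [hi, hj]

def cycleReps (g : PB) : Set ℕ :=
  {c | c ∈ g.Supp ∧ some c ∈ periodicPts g.step ∧ ∀ y ∈ g.orbit c, c ≤ y}

/-- One starting point for every orbit meeting `g.Supp`: the points outside the range start the
chains (including the isolated points), and each nontrivial cycle is represented by its least
element. -/
def orbitReps (g : PB) : Set ℕ := g.Ranᶜ ∪ g.cycleReps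

theorem orbitReps_subset_supp : g.orbitReps ⊆ g.Supp := by
  rintro b (hb | hb)
  · exact mem_supp_of_notMem_ran hb
  · exact hb.1

theorem Valid.orbitReps_finite (hg : g.Valid) : g.orbitReps.Finite :=
  hg.2.subset orbitReps_subset_supp

theorem Valid.sInf_orbit_mem_cycleReps (hg : g.Valid) (hx : x ∈ g.Supp)
    (hper : some x ∈ periodicPts g.step) : sInf (g.orbit x) ∈ g.cycleReps := by
  have hc : sInf (g.orbit x) ∈ g.orbit x := Nat.sInf_mem ⟨x, 0, rfl⟩
  obtain ⟨k, hk⟩ := hc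
  exact ⟨hg.iterate_step_mem_supp hx hk, mem_periodicPts_of_mem_orbit hper ⟨k, hk⟩,
    fun y hy => Nat.sInf_le (mem_orbit_trans ⟨k, hk⟩ hy)⟩

/-- Following a non-periodic point backwards, one leaves the range after at most `#g.Supp`
steps. -/
theorem Valid.exists_notMem_ran_mem_orbit (hg : g.Valid) (hx : x ∈ g.Supp)
    (hper : some x ∉ periodicPts g.step) : ∃ a ∉ g.Ran, x ∈ g.orbit a := by
  set K := {k | ∃ a, g.step^[k] (some a) = some x}
  have hbdd : ∀ k ∈ K, k ≤ g.Supp.ncard := by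
    rintro k ⟨a, ha⟩
    by_contra! hlt
    have haS : a ∈ g.Supp := fun hfix => by
      rw [iterate_fixed (show g.step (some a) = some a from hfix)] at ha
      exact hx (Option.some_injective _ ha ▸ hfix)
    exact hper (hg.mem_periodicPts_of_ncard_le haS hlt.le ha)
  obtain ⟨a, ha⟩ : sSup K ∈ K := Nat.sSup_mem ⟨0, x, rfl⟩ ⟨_, hbdd⟩
  refine ⟨a, fun ⟨w, hw⟩ => ?_, _, ha⟩
  have hsucc : sSup K + 1 ∈ K := ⟨w, by rw [iterate_succ_apply, step_some, hw, ha]⟩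
  exact (le_csSup ⟨_, hbdd⟩ hsucc).not_gt (Nat.lt_succ_self _)

theorem Valid.exists_mem_orbitReps_mem_orbit (hg : g.Valid) (hx : x ∈ g.Supp) :
    ∃ b ∈ g.orbitReps, x ∈ g.orbit b := by
  by_cases hper : some x ∈ periodicPts g.step
  · exact ⟨_, Or.inr (hg.sInf_orbit_mem_cycleReps hx hper),
      mem_orbit_of_mem_periodicPts hper (Nat.sInf_mem ⟨x, 0, rfl⟩)⟩
  · obtain ⟨a, ha, hxa⟩ := hg.exists_notMem_ran_mem_orbit hx hper
    exact ⟨a, Or.inl ha, hxa⟩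

theorem Valid.supp_eq_biUnion_orbit (hg : g.Valid) : g.Supp = ⋃ b ∈ g.orbitReps, g.orbit b := by
  ext y
  simp only [mem_iUnion, exists_prop]
  refine ⟨hg.exists_mem_orbitReps_mem_orbit, ?_⟩
  rintro ⟨b, hb, k, hk⟩
  exact hg.iterate_step_mem_supp (orbitReps_subset_supp hb) hk

theorem Valid.eq_of_mem_orbit (hg : g.Valid) (hb : b ∈ g.orbitReps)
    (hb' : b' ∈ g.orbitReps) (hy : y ∈ g.orbit b) (hy' : y ∈ g.orbit b') : b = b' := by
  wlog hcyc : b' ∈ g.cycleReps generalizing b b'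
  · rcases hb with hb | hb
    · obtain ⟨i, hi⟩ := hy
      obtain ⟨j, hj⟩ := hy'
      exact (hg.eq_of_iterate_step_eq_of_notMem_ran hb (hb'.resolve_right hcyc) hi hj).1
    · exact (this hb' (Or.inr hb) hy' hy hb).symm
  have hyper := mem_periodicPts_of_mem_orbit hcyc.2.1 hy'
  have hbper := (hg.mem_periodicPts_iff_of_mem_orbit hy).mp hyper
  have hbc : b ∈ g.cycleReps := hb.resolve_left (not_not.mpr (mem_ran_of_mem_periodicPts hbper))
  exact le_antisymm (hbc.2.2 b' (mem_orbit_trans hy (mem_orbit_of_mem_periodicPts hcyc.2.1 hy')))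
    (hcyc.2.2 b (mem_orbit_trans hy' (mem_orbit_of_mem_periodicPts hbper hy)))

theorem Valid.pairwiseDisjoint_orbit (hg : g.Valid) : g.orbitReps.PairwiseDisjoint g.orbit :=
  fun _ hb _ hb' hne => disjoint_left.mpr fun _ hy hy' => hne (hg.eq_of_mem_orbit hb hb' hy hy')

open Classical in
/-- The conjugacy invariant of an orbit: the length of a chain or of a cycle. For an isolated
point the set defining `qlen` is empty, so its `qlen` is `sInf ∅ = 0`. -/
noncomputable def orbitShape (g : PB) (b : ℕ) : ℕ ⊕ ℕ :=
  if b ∈ g.Ran then .inr (minimalPeriod g.step (some b)) else .inl (g.qlen b)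

/-- `b` and `b'` have isomorphic forward orbits under `g` and `g'`. -/
def SameOrbitPattern (g g' : PB) (b b' : ℕ) : Prop :=
  (∀ i, g.step^[i] (some b) = none ↔ g'.step^[i] (some b') = none) ∧
    ∀ i j, g.step^[i] (some b) = g.step^[j] (some b) ↔ g'.step^[i] (some b') = g'.step^[j] (some b')

theorem sameOrbitPattern_of_orbitShape_eq (hg : g.Valid) (hg' : g'.Valid) (hb : b ∈ g.orbitReps)
    (hb' : b' ∈ g'.orbitReps) (h : g.orbitShape b = g'.orbitShape b') :
    SameOrbitPattern g g' b b' := by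
  unfold orbitShape at h
  by_cases hbR : b ∈ g.Ran <;> by_cases hbR' : b' ∈ g'.Ran <;>
    simp only [hbR, hbR', if_true, if_false, reduceCtorEq, Sum.inl.injEq, Sum.inr.injEq] at h
  · have hper := (hb.resolve_left (not_not.mpr hbR)).2.1
    have hper' := (hb'.resolve_left (not_not.mpr hbR')).2.1
    refine ⟨fun i => ?_, fun i j => ?_⟩
    · simp [iterate_step_ne_none_of_mem_periodicPts hper,
        iterate_step_ne_none_of_mem_periodicPts hper']
    · rw [iterate_eq_iterate_iff_of_mem_periodicPts hper,
        iterate_eq_iterate_iff_of_mem_periodicPts hper', h]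
  · refine ⟨fun i => ?_, fun i j => ?_⟩
    · rw [hg.iterate_step_eq_none_iff hbR, hg'.iterate_step_eq_none_iff hbR', h]
    · rw [hg.iterate_step_eq_iterate_step_iff_of_notMem_ran hbR,
        hg'.iterate_step_eq_iterate_step_iff_of_notMem_ran hbR', h]

theorem setOf_orbitShape_eq_inl (L : ℕ) :
    {b | b ∈ g.orbitReps ∧ g.orbitShape b = .inl L} = {b | b ∉ g.Ran ∧ g.qlen b = L} := by
  ext b
  by_cases hbR : b ∈ g.Ran <;> simp [orbitShape, orbitReps, hbR]

theorem setOf_orbitShape_eq_inr (n : ℕ) :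
    {b | b ∈ g.orbitReps ∧ g.orbitShape b = .inr n} =
      {c | c ∈ g.cycleReps ∧ minimalPeriod g.step (some c) = n} := by
  ext b
  by_cases hbR : b ∈ g.Ran
  · simp [orbitShape, orbitReps, hbR]
  · have : b ∉ g.cycleReps := fun hc => hbR (mem_ran_of_mem_periodicPts hc.2.1)
    simp [orbitShape, orbitReps, hbR, this]

theorem Valid.mem_dom_iff_qlen_pos (hg : g.Valid) (hb : b ∉ g.Ran) :
    b ∈ g.Dom ↔ 0 < g.qlen b := by
  have h := hg.iterate_step_eq_none_iff hb (i := 1)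
  rw [iterate_one, step_some, Nat.lt_one_iff] at h
  rw [Dom, mem_ofPred_eq, Ne, h, Nat.pos_iff_ne_zero]

theorem Valid.setOf_orbitShape_eq_inl_zero (hg : g.Valid) :
    {b | b ∈ g.orbitReps ∧ g.orbitShape b = .inl 0} = {x | x ∉ g.Dom ∧ x ∉ g.Ran} := by
  rw [setOf_orbitShape_eq_inl]
  ext b
  simp only [mem_ofPred_eq]
  constructor
  · rintro ⟨hb, h0⟩
    exact ⟨by rw [hg.mem_dom_iff_qlen_pos hb, h0]; exact lt_irrefl 0, hb⟩
  · rintro ⟨hbD, hb⟩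
    exact ⟨hb, by simpa [hg.mem_dom_iff_qlen_pos hb] using hbD⟩

theorem Valid.setOf_orbitShape_eq_inl_of_pos (hg : g.Valid) {L : ℕ} (hL : 0 < L) :
    {b | b ∈ g.orbitReps ∧ g.orbitShape b = .inl L} = {a | a ∈ g.Dom \ g.Ran ∧ g.qlen a = L} := by
  rw [setOf_orbitShape_eq_inl]
  ext b
  simp only [mem_ofPred_eq, mem_sdiff]
  constructor
  · rintro ⟨hb, rfl⟩
    exact ⟨⟨(hg.mem_dom_iff_qlen_pos hb).mpr hL, hb⟩, rfl⟩
  · rintro ⟨⟨-, hb⟩, hbL⟩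
    exact ⟨hb, hbL⟩

theorem two_le_minimalPeriod_of_mem_cycleReps {c : ℕ} (hc : c ∈ g.cycleReps) :
    2 ≤ minimalPeriod g.step (some c) := by
  have hpos := minimalPeriod_pos_of_mem_periodicPts hc.2.1
  have hne := mem_supp_iff_minimalPeriod_ne_one.mp hc.1
  omega

theorem cycPt_iff {n : ℕ} :
    g.CycPt x n ↔ some x ∈ periodicPts g.step ∧ minimalPeriod g.step (some x) = n := by
  simp only [CycPt, iter_eq_iterate_step]
  constructor
  · rintro ⟨-, ⟨hn, hnx⟩, hmin⟩
    have hper : some x ∈ periodicPts g.step := mk_mem_periodicPts hn hnx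
    refine ⟨hper, le_antisymm (IsPeriodicPt.minimalPeriod_le hn hnx) (hmin ?_)⟩
    exact ⟨minimalPeriod_pos_of_mem_periodicPts hper, iterate_minimalPeriod⟩
  · rintro ⟨hper, rfl⟩
    refine ⟨fun k => Option.ne_none_iff_exists'.mp
      (iterate_step_ne_none_of_mem_periodicPts hper k), ⟨?_, iterate_minimalPeriod⟩,
      fun m ⟨hm, hmx⟩ => IsPeriodicPt.minimalPeriod_le hm hmx⟩
    exact minimalPeriod_pos_of_mem_periodicPts hper



theorem Valid.exists_mem_cycleReps_of_cycPt (hg : g.Valid) {n : ℕ} (hn : 2 ≤ n)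
    (hx : g.CycPt x n) : ∃ c ∈ g.cycleReps, minimalPeriod g.step (some c) = n ∧
      ∃ k < n, g.step^[k] (some c) = some x := by
  rw [cycPt_iff] at hx
  obtain ⟨c, hc, k, hk⟩ := hg.exists_mem_orbitReps_mem_orbit
    (mem_supp_iff_minimalPeriod_ne_one.mpr (by rw [hx.2]; omega))
  have hcper := (hg.mem_periodicPts_iff_of_mem_orbit ⟨k, hk⟩).mp hx.1
  have hcn : minimalPeriod g.step (some c) = n := by
    rw [← hx.2, ← hk, minimalPeriod_apply_iterate hcper]
  refine ⟨c, hc.resolve_left (not_not.mpr (mem_ran_of_mem_periodicPts hcper)), hcn, k % n,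
    Nat.mod_lt _ (by omega), ?_⟩
  rw [← hcn, iterate_mod_minimalPeriod_eq, hk]

/-- The points on cycles of length `n` are the `g.step^[k] c`, `k < n`, for the cycle
representatives `c` of period `n`, each counted once. -/
theorem Valid.ncard_setOf_cycPt (hg : g.Valid) {n : ℕ} (hn : 2 ≤ n) :
    {x | g.CycPt x n}.ncard =
      {c | c ∈ g.cycleReps ∧ minimalPeriod g.step (some c) = n}.ncard * n := by
  set R := {c | c ∈ g.cycleReps ∧ minimalPeriod g.step (some c) = n}
  set F : ℕ × ℕ → Option ℕ := fun p => g.step^[p.2] (some p.1)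
  have himage : some '' {x | g.CycPt x n} = F '' (R ×ˢ Iio n) := by
    ext o
    constructor
    · rintro ⟨x, hx, rfl⟩
      obtain ⟨c, hc, hcn, k, hk, hkx⟩ := hg.exists_mem_cycleReps_of_cycPt hn hx
      exact ⟨(c, k), ⟨⟨hc, hcn⟩, hk⟩, hkx⟩
    · rintro ⟨⟨c, i⟩, ⟨⟨hc, hcn⟩, -⟩, rfl⟩
      obtain ⟨y, hy⟩ := Option.ne_none_iff_exists'.mp
        (iterate_step_ne_none_of_mem_periodicPts hc.2.1 i)
      refine ⟨y, ?_, hy.symm⟩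
      rw [mem_ofPred_eq, cycPt_iff, ← hy, minimalPeriod_apply_iterate hc.2.1]
      exact ⟨hy ▸ mem_periodicPts_of_mem_orbit hc.2.1 ⟨i, hy⟩, hcn⟩
  have hinj : InjOn F (R ×ˢ Iio n) := by
    rintro ⟨c, i⟩ ⟨⟨hc, hcn⟩, hi⟩ ⟨c', i'⟩ ⟨⟨hc', -⟩, hi'⟩ h
    simp only [F] at h
    dsimp only at hc hcn hi hc' hi'
    obtain ⟨y, hy⟩ := Option.ne_none_iff_exists'.mp
      (iterate_step_ne_none_of_mem_periodicPts hc.2.1 i)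
    obtain rfl : c = c' := hg.eq_of_mem_orbit (Or.inr hc) (Or.inr hc') ⟨i, hy⟩ ⟨i', h ▸ hy⟩
    rw [iterate_eq_iterate_iff_of_mem_periodicPts hc.2.1, hcn, Nat.mod_eq_of_lt hi,
      Nat.mod_eq_of_lt hi'] at h
    rw [h]
  calc {x | g.CycPt x n}.ncard = (some '' {x | g.CycPt x n}).ncard :=
        (ncard_image_of_injective _ (Option.some_injective _)).symm
    _ = (R ×ˢ Iio n).ncard := by rw [himage, hinj.ncard_image]
    _ = R.ncard * n := by rw [ncard_prod, ncard_Iio_nat]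

theorem ncard_orbitShape_eq {g₁ g₂ : PB} (h₁ : g₁.Valid) (h₂ : g₂.Valid)
    (hq : ∀ n, {a | a ∈ g₁.Dom \ g₁.Ran ∧ g₁.qlen a = n}.ncard =
      {a | a ∈ g₂.Dom \ g₂.Ran ∧ g₂.qlen a = n}.ncard)
    (hc : ∀ n, 2 ≤ n → {x | g₁.CycPt x n}.ncard = {x | g₂.CycPt x n}.ncard)
    (hm : {x | x ∉ g₁.Dom ∧ x ∉ g₁.Ran}.ncard = {x | x ∉ g₂.Dom ∧ x ∉ g₂.Ran}.ncard)
    (σ : ℕ ⊕ ℕ) : {b | b ∈ g₂.orbitReps ∧ g₂.orbitShape b = σ}.ncard =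
      {b | b ∈ g₁.orbitReps ∧ g₁.orbitShape b = σ}.ncard := by
  rcases σ with L | n
  · rcases Nat.eq_zero_or_pos L with rfl | hL
    · rw [h₁.setOf_orbitShape_eq_inl_zero, h₂.setOf_orbitShape_eq_inl_zero, hm]
    · rw [h₁.setOf_orbitShape_eq_inl_of_pos hL, h₂.setOf_orbitShape_eq_inl_of_pos hL, hq]
  · rw [setOf_orbitShape_eq_inr, setOf_orbitShape_eq_inr]
    rcases lt_or_ge n 2 with hn | hn
    · have hempty : ∀ g : PB, {c | c ∈ g.cycleReps ∧ minimalPeriod g.step (some c) = n} = ∅ :=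
        fun g => eq_empty_of_forall_notMem fun c ⟨hc, hcn⟩ => by
          have := two_le_minimalPeriod_of_mem_cycleReps hc
          omega
      rw [hempty, hempty]
    · exact Nat.eq_of_mul_eq_mul_right (m := n) (by omega)
        (by rw [← h₁.ncard_setOf_cycPt hn, ← h₂.ncard_setOf_cycPt hn, hc n hn])

theorem exists_intertwining_of_sameOrbitPattern {B : Set ℕ} {β : ℕ → ℕ}
    (hd : B.PairwiseDisjoint g.orbit) (hpat : ∀ b ∈ B, SameOrbitPattern g g' b (β b)) :
    ∃ f : ℕ → ℕ, ∀ b ∈ B, ∀ i y, g.step^[i] (some b) = some y →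
      g'.step^[i] (some (β b)) = some (f y) := by
  have hcover : ∀ y ∈ ⋃ b ∈ B, g.orbit b, ∃ b ∈ B, ∃ k, g.step^[k] (some b) = some y := by
    intro y hy
    simpa [orbit] using hy
  choose! c hc k hk using hcover
  refine ⟨fun y => (g'.step^[k y] (some (β (c y)))).getD 0, fun b hb i y hy => ?_⟩
  have hyU : y ∈ ⋃ b ∈ B, g.orbit b := mem_biUnion hb ⟨i, hy⟩
  have hcb : c y = b :=
    hd.elim (hc y hyU) hb (not_disjoint_iff.mpr ⟨y, ⟨k y, hk y hyU⟩, ⟨i, hy⟩⟩)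
  have hki : g.step^[k y] (some b) = g.step^[i] (some b) := by rw [← hcb, hk y hyU, hcb, hy]
  obtain ⟨z, hz⟩ := Option.ne_none_iff_exists'.mp (((hpat b hb).1 i).not.mp (by simp [hy]))
  simp only [hcb, ((hpat b hb).2 _ _).mp hki, hz, Option.getD_some]

theorem exists_bijOn_supp_of_sameOrbitPattern {g₁ g₂ : PB} {B₁ B₂ : Set ℕ} {β : ℕ → ℕ}
    (hB₁ : g₁.Supp = ⋃ b ∈ B₁, g₁.orbit b) (hB₂ : g₂.Supp = ⋃ b ∈ B₂, g₂.orbit b)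
    (hd₁ : B₁.PairwiseDisjoint g₁.orbit) (hd₂ : B₂.PairwiseDisjoint g₂.orbit)
    (hβ : BijOn β B₂ B₁) (hpat : ∀ b ∈ B₂, SameOrbitPattern g₂ g₁ b (β b)) :
    ∃ f : ℕ → ℕ, BijOn f g₂.Supp g₁.Supp ∧ ∀ y ∈ g₂.Supp, g₁ (f y) = (g₂ y).map f := by
  obtain ⟨f, hf⟩ := exists_intertwining_of_sameOrbitPattern hd₂ hpat
  have hcover : ∀ y ∈ g₂.Supp, ∃ b ∈ B₂, ∃ k, g₂.step^[k] (some b) = some y := by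
    intro y hy
    rw [hB₂] at hy
    simpa [orbit] using hy
  refine ⟨f, ⟨fun y hy => ?_, fun y hy y' hy' hyy => ?_, fun z hz => ?_⟩, fun y hy => ?_⟩
  · obtain ⟨b, hb, k, hk⟩ := hcover y hy
    rw [hB₁]
    exact mem_biUnion (hβ.mapsTo hb) ⟨k, hf b hb k y hk⟩
  · obtain ⟨b, hb, k, hk⟩ := hcover y hy
    obtain ⟨b', hb', k', hk'⟩ := hcover y' hy'
    have e := hf b hb k y hk
    have e' := hf b' hb' k' y' hk'
    rw [hyy] at e
    obtain rfl : b = b' := hβ.injOn hb hb' <| hd₁.elim (hβ.mapsTo hb) (hβ.mapsTo hb')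
      (not_disjoint_iff.mpr ⟨f y', ⟨_, e⟩, ⟨_, e'⟩⟩)
    have := ((hpat b hb).2 k k').mpr (e.trans e'.symm)
    rw [hk, hk'] at this
    exact Option.some_injective _ this
  · rw [hB₁] at hz
    obtain ⟨a₁, ha₁, i, hi⟩ := mem_iUnion₂.mp hz
    obtain ⟨a, ha, rfl⟩ := hβ.surjOn ha₁
    obtain ⟨y, hy⟩ := Option.ne_none_iff_exists'.mp (((hpat a ha).1 i).not.mpr (by simp [hi]))
    exact ⟨y, hB₂ ▸ mem_biUnion ha ⟨i, hy⟩,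
      Option.some_injective _ ((hf a ha i y hy).symm.trans hi)⟩
  · obtain ⟨b, hb, k, hk⟩ := hcover y hy
    have e := hf b hb k y hk
    cases hz : g₂ y with
    | some z =>
      have := hf b hb (k + 1) z (by rw [iterate_succ_apply', hk]; exact hz)
      rwa [iterate_succ_apply', e] at this
    | none =>
      have := ((hpat b hb).1 (k + 1)).mp (by rw [iterate_succ_apply', hk]; exact hz)
      rwa [iterate_succ_apply', e] at this

theorem exists_perm_eq_conj_of_bijOn {g₁ g₂ : PB} {f : ℕ → ℕ} (h₁ : g₁.Valid) (h₂ : g₂.Valid)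
    (hf : BijOn f g₂.Supp g₁.Supp) (hcomm : ∀ y ∈ g₂.Supp, g₁ (f y) = (g₂ y).map f) :
    ∃ s : Equiv.Perm ℕ, {x | s x ≠ x}.Finite ∧ g₁ = PB.conj s g₂ := by
  obtain ⟨s, hsfin, hsf, hsc⟩ := hf.exists_perm_extend h₂.2 h₁.2
  refine ⟨s, hsfin, funext fun x => ?_⟩
  obtain ⟨y, rfl⟩ := s.surjective x
  show g₁ (s y) = (g₂ (s⁻¹ (s y))).map s
  rw [show s⁻¹ (s y) = y from s.symm_apply_apply y]
  by_cases hy : y ∈ g₂.Supp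
  · rw [hsf hy, hcomm y hy]
    cases hz : g₂ y with
    | none => rfl
    | some z => simp [hsf (h₂.step_mem_supp hy hz)]
  · have h₂y : g₂ y = some y := not_not.mp hy
    have h₁y : g₁ (s y) = some (s y) := not_not.mp (hsc hy)
    rw [h₁y, h₂y]
    rfl

end PB

/-- If `r₁, r₂ ∈ R_∞` have the same invariants — for each `n` the same
number of quasi-cycles of length `n` (i.e. of points `a ∈ D \ I` with `m(r,a) = n`), the
same number of points on nontrivial cycles of each length `n ≥ 2`, and the same number of
points outside `D(r) ∪ I(r)` — then `r₁ = s r₂ s⁻¹` for some finite permutation `s ∈ S_∞`. -/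
theorem stmt4 (g₁ g₂ : PB) (h₁ : g₁.Valid) (h₂ : g₂.Valid)
    (hq : ∀ n, {a | a ∈ g₁.Dom \ g₁.Ran ∧ g₁.qlen a = n}.ncard =
               {a | a ∈ g₂.Dom \ g₂.Ran ∧ g₂.qlen a = n}.ncard)
    (hc : ∀ n, 2 ≤ n →
      {x | g₁.CycPt x n}.ncard = {x | g₂.CycPt x n}.ncard)
    (hm : {x | x ∉ g₁.Dom ∧ x ∉ g₁.Ran}.ncard = {x | x ∉ g₂.Dom ∧ x ∉ g₂.Ran}.ncard) :
    ∃ s : Equiv.Perm ℕ, {x | s x ≠ x}.Finite ∧ g₁ = PB.conj s g₂ := by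
  obtain ⟨β, hβ, hshape⟩ := exists_bijOn_of_ncard_fiber_eq h₂.orbitReps_finite
    h₁.orbitReps_finite g₂.orbitShape g₁.orbitShape (PB.ncard_orbitShape_eq h₁ h₂ hq hc hm)
  obtain ⟨f, hf, hcomm⟩ := PB.exists_bijOn_supp_of_sameOrbitPattern h₁.supp_eq_biUnion_orbit
    h₂.supp_eq_biUnion_orbit h₁.pairwiseDisjoint_orbit h₂.pairwiseDisjoint_orbit hβ
    fun b hb => PB.sameOrbitPattern_of_orbitShape_eq h₂ h₁ hb (hβ.mapsTo hb) (hshape b hb).symm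
  exact PB.exists_perm_eq_conj_of_bijOn h₁ h₂ hf hcomm
end

section
/- With P_i = weak-lim_n π((i n)) for a tame representation π of S_∞, the following relations hold: (i) π(s) P_i π(s⁻¹) = P_{s(i)} for all s ∈ S_∞ and P_i P_k = P_k P_i for all i, k; (ii) if s ∈ S_A for a finite set A ⊂ ℕ, then π(s) · ∏_{i ∈ A} P_i = ∏_{i ∈ A} P_i. -/
open scoped ComplexInnerProductSpace
open Filter Topology

/-- Finite (finitary) permutations of `ℕ`: the elements of `S_∞`. -/
def FinPerm (s : Equiv.Perm ℕ) : Prop := {x | s x ≠ x}.Finite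

/-!
For `n` outside the support of `s`, `(s(i) n) = s (i n) s⁻¹`; passing to the weak limit gives
`π(s) P_i = P_{s(i)} π(s)`. In particular `π((i n))` commutes with `P_k` once `n ≠ k`, and each
`P_i` is symmetric, being a weak limit of the self-adjoint `π((i n))`. Hence
`P_i P_k η = weak-lim π((i n)) P_k η = weak-lim P_k π((i n)) η = P_k P_i η`.

Writing `s ∈ S_A` as a product of transpositions `(a b)` with `a, b ∈ A` and using commutativity,
(ii) reduces to `π((a b)) P_a P_b = P_a P_b`. For distinct `a, b, n, m` we have
`(a b)(a n)(b m) = (a n)(b m)(n m)`, so `π((a b)) P_a P_b η - P_a P_b η` is an iterated weak limit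
of the vectors `π((a n))π((b m))(π((n m))η - η)`, which tameness makes uniformly small.
-/

theorem FinPerm.swap (a b : ℕ) : FinPerm (Equiv.swap a b) :=
  (Set.toFinite {a, b}).subset fun _ hx => (Equiv.swap_apply_ne_self_iff.mp hx).2

theorem FinPerm.mul {s t : Equiv.Perm ℕ} (hs : FinPerm s) (ht : FinPerm t) : FinPerm (s * t) :=
  (hs.union ht).subset fun x hx => by_contra fun h => hx (by simp_all)

theorem FinPerm.inv {s : Equiv.Perm ℕ} (hs : FinPerm s) : FinPerm s⁻¹ :=
  hs.subset fun _ hx h => hx (Equiv.Perm.inv_eq_iff_eq.mpr h.symm)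

theorem Equiv.swap_mul_swap_mul_swap_eq {a b n m : ℕ} (hab : a ≠ b) (hna : n ≠ a) (hnb : n ≠ b)
    (hma : m ≠ a) (hmb : m ≠ b) (hnm : n ≠ m) :
    swap a b * (swap a n * swap b m) = swap a n * swap b m * swap n m := by
  ext x
  simp only [Perm.mul_apply, swap_apply_def]
  split_ifs <;> omega

section

variable {H : Type*} [NormedAddCommGroup H]

structure IsFinitaryUnitaryRep [NormedSpace ℂ H] (π : Equiv.Perm ℕ → H →L[ℂ] H) : Prop where
  map_mul : ∀ s t, FinPerm s → FinPerm t → π (s * t) = π s ∘L π t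
  map_one : π 1 = 1
  norm_map : ∀ s, FinPerm s → ∀ η, ‖π s η‖ = ‖η‖

def IsTame [NormedSpace ℂ H] (π : Equiv.Perm ℕ → H →L[ℂ] H) : Prop :=
  ∀ η : H, ∀ ε > (0 : ℝ), ∃ N, ∀ k n, N < k → N < n → k ≠ n → ‖π (Equiv.swap k n) η - η‖ < ε

def IsSwapWeakLimit [InnerProductSpace ℂ H] (π : Equiv.Perm ℕ → H →L[ℂ] H)
    (P : ℕ → H →L[ℂ] H) : Prop :=
  ∀ i, ∀ η ζ : H, Tendsto (fun n => ⟪π (Equiv.swap i n) η, ζ⟫) atTop (𝓝 ⟪P i η, ζ⟫)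

variable [InnerProductSpace ℂ H] {π : Equiv.Perm ℕ → H →L[ℂ] H}

namespace IsFinitaryUnitaryRep

theorem map_mul_apply (hπ : IsFinitaryUnitaryRep π) {s t : Equiv.Perm ℕ} (hs : FinPerm s)
    (ht : FinPerm t) (x : H) : π (s * t) x = π s (π t x) := by
  rw [hπ.map_mul s t hs ht, ContinuousLinearMap.comp_apply]

theorem map_comp_map_inv (hπ : IsFinitaryUnitaryRep π) {s : Equiv.Perm ℕ} (hs : FinPerm s) :
    π s ∘L π s⁻¹ = 1 := by
  rw [← hπ.map_mul _ _ hs hs.inv, mul_inv_cancel, hπ.map_one]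

theorem inner_map_left (hπ : IsFinitaryUnitaryRep π) {s : Equiv.Perm ℕ} (hs : FinPerm s)
    (x y : H) : ⟪π s x, y⟫ = ⟪x, π s⁻¹ y⟫ :=
  calc ⟪π s x, y⟫ = ⟪π s x, π s (π s⁻¹ y)⟫ := by
        rw [← ContinuousLinearMap.comp_apply, hπ.map_comp_map_inv hs]
        rfl
    _ = ⟪x, π s⁻¹ y⟫ := LinearIsometry.inner_map_map ⟨(π s).toLinearMap, hπ.norm_map s hs⟩ _ _

theorem inner_map_swap_left (hπ : IsFinitaryUnitaryRep π) (a b : ℕ) (x y : H) :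
    ⟪π (Equiv.swap a b) x, y⟫ = ⟪x, π (Equiv.swap a b) y⟫ := by
  simpa only [Equiv.swap_inv] using hπ.inner_map_left (FinPerm.swap a b) x y

end IsFinitaryUnitaryRep

namespace IsSwapWeakLimit

variable {P : ℕ → H →L[ℂ] H}

theorem inner_apply_left (hπ : IsFinitaryUnitaryRep π) (hP : IsSwapWeakLimit π P) (i : ℕ)
    (x y : H) : ⟪P i x, y⟫ = ⟪x, P i y⟫ := by
  have h := ((Complex.continuous_conj.tendsto _).comp (hP i y x))
  simp only [Function.comp_def, inner_conj_symm, ← hπ.inner_map_swap_left] at h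
  exact tendsto_nhds_unique (hP i x y) h

theorem norm_inner_le_of_eventually_le (hP : IsSwapWeakLimit π P) {i : ℕ} {x y : H} {r : ℝ}
    (h : ∀ᶠ n in atTop, ‖⟪π (Equiv.swap i n) x, y⟫‖ ≤ r) : ‖⟪P i x, y⟫‖ ≤ r :=
  le_of_tendsto (hP i x y).norm h

theorem map_comp (hπ : IsFinitaryUnitaryRep π) (hP : IsSwapWeakLimit π P) {s : Equiv.Perm ℕ}
    (hs : FinPerm s) (i : ℕ) : π s ∘L P i = P (s i) ∘L π s := by
  obtain ⟨N, hN⟩ := hs.bddAbove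
  ext η
  refine ext_inner_right ℂ fun ζ => tendsto_nhds_unique ?_ (hP (s i) (π s η) ζ)
  rw [ContinuousLinearMap.comp_apply, hπ.inner_map_left hs]
  refine (hP i η (π s⁻¹ ζ)).congr' ?_
  filter_upwards [eventually_gt_atTop N] with n hn
  have hsn : s n = n := by_contra fun h => (hN h).not_gt hn
  have hconj : Equiv.swap (s i) n * s = s * Equiv.swap i n := by
    conv_lhs => rw [← hsn]
    rw [Equiv.swap_apply_apply, inv_mul_cancel_right]
  rw [← hπ.inner_map_left hs, ← hπ.map_mul_apply hs (.swap i n), ← hconj,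
    hπ.map_mul_apply (.swap _ _) hs]

theorem conj (hπ : IsFinitaryUnitaryRep π) (hP : IsSwapWeakLimit π P) {s : Equiv.Perm ℕ}
    (hs : FinPerm s) (i : ℕ) : π s ∘L P i ∘L π s⁻¹ = P (s i) := by
  rw [← ContinuousLinearMap.comp_assoc, hP.map_comp hπ hs, ContinuousLinearMap.comp_assoc,
    hπ.map_comp_map_inv hs]
  exact mul_one _

theorem commute (hπ : IsFinitaryUnitaryRep π) (hP : IsSwapWeakLimit π P) (i k : ℕ) :
    Commute (P i) (P k) := by
  rcases eq_or_ne i k with rfl | hik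
  · exact Commute.refl _
  refine ContinuousLinearMap.ext fun η => ext_inner_right ℂ fun ζ =>
    tendsto_nhds_unique (hP i (P k η) ζ) ?_
  have h := hP i η (P k ζ)
  simp only [← hP.inner_apply_left hπ k] at h
  refine h.congr' ?_
  filter_upwards [eventually_gt_atTop (max i k)] with n hn
  have hk : Equiv.swap i n k = k := Equiv.swap_apply_of_ne_of_ne hik.symm (by omega)
  have h' := hP.map_comp hπ (.swap i n) k
  rw [hk] at h'
  rw [← ContinuousLinearMap.comp_apply, ← h', ContinuousLinearMap.comp_apply]

theorem map_swap_mul_mul (hπ : IsFinitaryUnitaryRep π) (hP : IsSwapWeakLimit π P)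
    (htame : IsTame π) {a b : ℕ} (hab : a ≠ b) :
    π (Equiv.swap a b) * (P a * P b) = P a * P b := by
  refine ContinuousLinearMap.ext fun η => eq_of_forall_dist_le fun ε hε => ?_
  obtain ⟨N, hN⟩ := htame η ε hε
  rw [dist_eq_norm, ← innerSL_apply_norm ℂ]
  refine ContinuousLinearMap.opNorm_le_bound _ hε.le fun ζ => ?_
  simp only [innerSL_apply_apply, ContinuousLinearMap.mul_def, ContinuousLinearMap.comp_apply]
  rw [inner_sub_left, hπ.inner_map_swap_left, ← inner_sub_right]
  refine hP.norm_inner_le_of_eventually_le ?_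
  filter_upwards [eventually_gt_atTop (max N (max a b))] with n hn
  rw [hπ.inner_map_swap_left]
  refine hP.norm_inner_le_of_eventually_le ?_
  filter_upwards [eventually_gt_atTop (max N (max n (max a b)))] with m hm
  have hperm : π (Equiv.swap a b) (π (Equiv.swap a n) (π (Equiv.swap b m) η))
      = π (Equiv.swap a n) (π (Equiv.swap b m) (π (Equiv.swap n m) η)) := by
    rw [← hπ.map_mul_apply (.swap b m) (.swap n m),
      ← hπ.map_mul_apply (.swap a n) ((FinPerm.swap b m).mul (.swap n m)),
      ← hπ.map_mul_apply (.swap a n) (.swap b m),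
      ← hπ.map_mul_apply (.swap a b) ((FinPerm.swap a n).mul (.swap b m)),
      Equiv.swap_mul_swap_mul_swap_eq hab (by omega) (by omega) (by omega) (by omega) (by omega),
      mul_assoc]
  calc ‖⟪π (Equiv.swap b m) η, π (Equiv.swap a n) (π (Equiv.swap a b) ζ - ζ)⟫‖
      = ‖⟪π (Equiv.swap a n) (π (Equiv.swap b m) (π (Equiv.swap n m) η - η)), ζ⟫‖ := by
        rw [← hπ.inner_map_swap_left, inner_sub_right, ← hπ.inner_map_swap_left, hperm,
          map_sub, map_sub, inner_sub_left]
    _ ≤ ‖π (Equiv.swap n m) η - η‖ * ‖ζ‖ := by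
        rw [← hπ.norm_map _ (.swap b m), ← hπ.norm_map _ (.swap a n)]
        exact norm_inner_le_norm _ _
    _ ≤ ε * ‖ζ‖ := by
        gcongr
        exact (hN n m (by omega) (by omega) (by omega)).le

theorem map_swap_mul_prod (hπ : IsFinitaryUnitaryRep π) (hP : IsSwapWeakLimit π P)
    (htame : IsTame π) {L : List ℕ} {a b : ℕ} (ha : a ∈ L) (hb : b ∈ L) (hab : a ≠ b) :
    π (Equiv.swap a b) * (L.map P).prod = (L.map P).prod := by
  have hperm : L.Perm (a :: b :: (L.erase a).erase b) :=
    (List.perm_cons_erase ha).trans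
      ((List.perm_cons_erase ((List.mem_erase_of_ne hab.symm).mpr hb)).cons a)
  rw [(hperm.map P).prod_eq' (List.pairwise_map.mpr (List.pairwise_of_forall (hP.commute hπ)))]
  simp only [List.map_cons, List.prod_cons, ← mul_assoc]
  rw [mul_assoc _ (P a), hP.map_swap_mul_mul hπ htame hab]

theorem map_mul_prod (hπ : IsFinitaryUnitaryRep π) (hP : IsSwapWeakLimit π P)
    (htame : IsTame π) {L : List ℕ} {s : Equiv.Perm ℕ} (hs : ∀ j, s j ≠ j → j ∈ L) :
    π s * (L.map P).prod = (L.map P).prod := by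
  have hsL : ∀ x, s x ∈ L ↔ x ∈ L := fun x => by
    by_cases hx : s x = x
    · rw [hx]
    · exact ⟨fun _ => hs x hx, fun _ => hs (s x) fun h => hx (s.injective h)⟩
  rw [← Equiv.Perm.ofSubtype_subtypePerm hsL hs]
  induction s.subtypePerm hsL using Equiv.Perm.swap_induction_on with
  | one => rw [map_one, hπ.map_one, one_mul]
  | swap_mul τ x y hxy ih =>
    have hτ : FinPerm (Equiv.Perm.ofSubtype τ) := L.finite_toSet.subset fun j hj =>
      by_contra fun h => hj (Equiv.Perm.ofSubtype_apply_of_not_mem τ h)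
    rw [map_mul, Equiv.Perm.ofSubtype_swap_eq, hπ.map_mul _ _ (.swap _ _) hτ,
      ← ContinuousLinearMap.mul_def, mul_assoc, ih,
      hP.map_swap_mul_prod hπ htame x.2 y.2 (Subtype.coe_ne_coe.mpr hxy)]

end IsSwapWeakLimit

end

theorem stmt9_general
    {H : Type*} [NormedAddCommGroup H] [InnerProductSpace ℂ H]
    (π : Equiv.Perm ℕ → H →L[ℂ] H)
    (hmul : ∀ s t : Equiv.Perm ℕ, FinPerm s → FinPerm t → π (s * t) = π s ∘L π t)
    (hone : π 1 = 1)
    (hunitary : ∀ s : Equiv.Perm ℕ, FinPerm s → ∀ η : H, ‖π s η‖ = ‖η‖)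
    (htame : ∀ η : H, ∀ ε > (0 : ℝ), ∃ N, ∀ k n, N < k → N < n → k ≠ n →
      ‖π (Equiv.swap k n) η - η‖ < ε)
    (P : ℕ → H →L[ℂ] H)
    (hP : ∀ i, ∀ η ζ : H,
      Tendsto (fun n => ⟪π (Equiv.swap i n) η, ζ⟫) atTop (𝓝 ⟪P i η, ζ⟫)) :
    (∀ s : Equiv.Perm ℕ, FinPerm s → ∀ i, π s ∘L P i ∘L π s⁻¹ = P (s i)) ∧
    (∀ i k, P i ∘L P k = P k ∘L P i) ∧
    (∀ A : Finset ℕ, ∀ s : Equiv.Perm ℕ, (∀ j, j ∉ A → s j = j) →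
      ∀ L : List ℕ, L.Nodup → (∀ j, j ∈ L ↔ j ∈ A) →
        π s ∘L (L.map P).prod = (L.map P).prod) := by
  have hπ : IsFinitaryUnitaryRep π := ⟨hmul, hone, hunitary⟩
  have hP' : IsSwapWeakLimit π P := hP
  refine ⟨fun s hs i => hP'.conj hπ hs i, fun i k => (hP'.commute hπ i k).eq, ?_⟩
  intro A s hsA L _ hLA
  exact hP'.map_mul_prod hπ htame fun j hj => (hLA j).mpr (by_contra fun h => hj (hsA j h))

/-- Let `π` be a tame unitary representation of `S_∞` and
`P_i = weak-lim_n π((i n))`.  Then: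
(i) `π(s) P_i π(s⁻¹) = P_{s(i)}` for all `s ∈ S_∞`, and the `P_i` pairwise commute;
(ii) if `s` is supported in a finite set `A`, then `π(s) ⬝ ∏_{i ∈ A} P_i = ∏_{i ∈ A} P_i`
(the product over any enumeration `L` of `A`). -/
theorem stmt9
    {H : Type*} [NormedAddCommGroup H] [InnerProductSpace ℂ H] [CompleteSpace H]
    (π : Equiv.Perm ℕ → H →L[ℂ] H)
    (hmul : ∀ s t : Equiv.Perm ℕ, FinPerm s → FinPerm t → π (s * t) = π s ∘L π t)
    (hone : π 1 = 1)
    (hunitary : ∀ s : Equiv.Perm ℕ, FinPerm s → ∀ η : H, ‖π s η‖ = ‖η‖)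
    (htame : ∀ η : H, ∀ ε > (0 : ℝ), ∃ N, ∀ k n, N < k → N < n → k ≠ n →
      ‖π (Equiv.swap k n) η - η‖ < ε)
    (P : ℕ → H →L[ℂ] H)
    (hP : ∀ i, ∀ η ζ : H,
      Tendsto (fun n => ⟪π (Equiv.swap i n) η, ζ⟫) atTop (𝓝 ⟪P i η, ζ⟫)) :
    (∀ s : Equiv.Perm ℕ, FinPerm s → ∀ i, π s ∘L P i ∘L π s⁻¹ = P (s i)) ∧
    (∀ i k, P i ∘L P k = P k ∘L P i) ∧
    (∀ A : Finset ℕ, ∀ s : Equiv.Perm ℕ, (∀ j, j ∉ A → s j = j) →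
      ∀ L : List ℕ, L.Nodup → (∀ j, j ∈ L ↔ j ∈ A) →
        π s ∘L (L.map P).prod = (L.map P).prod) :=
  stmt9_general π hmul hone hunitary htame P hP
end
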